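/- The a-invariant of the Hibi ring K[M] associated to a finite poset P equals -(rank P + 2), where a(K[M]) = -min{deg X^ω : ω ∈ int(ℝ_{≥0}M) ∩ M} via the canonical module description K_{K[M]} = ⊕_{ω ∈ int(ℝ_{≥0}M) ∩ M} K·X^ω. -/
import Mathlib

open Finset

variable (P : Type*) [PartialOrder P] [Fintype P]

noncomputable def posetRank (Q : Type*) [Preorder Q] : ℕ :=
  sSup {n : ℕ | ∃ f : Fin (n + 1) → Q, StrictMono f}

def hibiSemigroup : Set (WithBot P → ℕ) :=
  {f | ∀ a b : WithBot P, a ≤ b → f b ≤ f a}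

def hibiCone : Set (WithBot P → ℝ) :=
  {x | ∃ (s : Finset (WithBot P → ℕ)) (c : (WithBot P → ℕ) → ℝ),
    (↑s : Set (WithBot P → ℕ)) ⊆ hibiSemigroup P ∧ (∀ v, 0 ≤ c v) ∧
    x = ∑ v ∈ s, c v • (fun a => (v a : ℝ))}

instance fintypeWithBotAux : Fintype (WithBot P) := inferInstanceAs (Fintype (Option P))

section Aux
set_option linter.unusedSectionVars false
variable {P}

lemma chain_bdd : BddAbove {n : ℕ | ∃ f : Fin (n + 1) → P, StrictMono f} := by
  refine ⟨Fintype.card P, fun n hn => ?_⟩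
  obtain ⟨f, hf⟩ := hn
  have := Fintype.card_le_of_injective f hf.injective
  simp only [Fintype.card_fin] at this
  omega

noncomputable def pheight (a : P) : ℕ :=
  sSup {n : ℕ | ∃ g : Fin (n + 1) → P, StrictMono g ∧ g (Fin.last n) = a}

lemma strictMono_const_fin1 (a : P) : StrictMono (fun _ : Fin 1 => a) := by
  intro i j h
  have hi := i.isLt; have hj := j.isLt
  have := Fin.lt_def.mp h
  omega

lemma pheight_bdd (a : P) :
    BddAbove {n : ℕ | ∃ g : Fin (n + 1) → P, StrictMono g ∧ g (Fin.last n) = a} := by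
  refine BddAbove.mono ?_ (chain_bdd (P := P))
  rintro n ⟨g, hg, -⟩
  exact ⟨g, hg⟩

lemma pheight_spec (a : P) :
    ∃ g : Fin (pheight a + 1) → P, StrictMono g ∧ g (Fin.last (pheight a)) = a := by
  have h : pheight a ∈
      {n : ℕ | ∃ g : Fin (n + 1) → P, StrictMono g ∧ g (Fin.last n) = a} := by
    apply Nat.sSup_mem _ (pheight_bdd a)
    refine ⟨0, ?_⟩
    exact ⟨fun _ => a, strictMono_const_fin1 a, rfl⟩
  exact h

lemma pheight_le_rank (a : P) : pheight a ≤ posetRank P := by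
  obtain ⟨g, hg, -⟩ := pheight_spec a
  exact le_csSup chain_bdd ⟨g, hg⟩

lemma pheight_lt {a b : P} (hab : a < b) : pheight a < pheight b := by
  obtain ⟨g, hg, hga⟩ := pheight_spec a
  have key : pheight a + 1 ∈
      {m : ℕ | ∃ g : Fin (m + 1) → P, StrictMono g ∧ g (Fin.last m) = b} := by
    refine ⟨fun i => if h : (i : ℕ) < pheight a + 1 then g ⟨i, h⟩ else b, ?_, ?_⟩
    · intro i j hij
      have hij' := Fin.lt_def.mp hij
      by_cases hj : (j : ℕ) < pheight a + 1
      · have hi : (i : ℕ) < pheight a + 1 := by omega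
        simp only [dif_pos hi, dif_pos hj]
        exact hg (Fin.mk_lt_mk.mpr hij')
      · by_cases hi : (i : ℕ) < pheight a + 1
        · simp only [dif_pos hi, dif_neg hj]
          have h1 : g ⟨(i : ℕ), hi⟩ ≤ g (Fin.last (pheight a)) := hg.monotone (Fin.le_last _)
          rw [hga] at h1
          exact lt_of_le_of_lt h1 hab
        · have hi2 := i.isLt; have hj2 := j.isLt
          omega
    · have hlast : ¬ ((Fin.last (pheight a + 1) : ℕ) < pheight a + 1) := by simp
      exact dif_neg hlast
  have hle : pheight a + 1 ≤ pheight b := le_csSup (pheight_bdd b) key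
  omega

lemma rank_spec [Nonempty P] :
    ∃ f : Fin (posetRank P + 1) → P, StrictMono f := by
  have a := Classical.arbitrary P
  have h : posetRank P ∈ {n : ℕ | ∃ f : Fin (n + 1) → P, StrictMono f} := by
    apply Nat.sSup_mem _ chain_bdd
    refine ⟨0, ?_⟩
    exact ⟨fun _ => a, strictMono_const_fin1 a⟩
  exact h

lemma cone_le {x : WithBot P → ℝ} (hx : x ∈ hibiCone P) {a b : WithBot P}
    (hab : a ≤ b) : x b ≤ x a := by
  obtain ⟨s, c, hs, hc, rfl⟩ := hx
  simp only [Finset.sum_apply, Pi.smul_apply, smul_eq_mul]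
  exact Finset.sum_le_sum fun v hv =>
    mul_le_mul_of_nonneg_left (Nat.cast_le.mpr (hs hv a b hab)) (hc v)

lemma cone_nonneg {x : WithBot P → ℝ} (hx : x ∈ hibiCone P) (a : WithBot P) :
    0 ≤ x a := by
  obtain ⟨s, c, hs, hc, rfl⟩ := hx
  simp only [Finset.sum_apply, Pi.smul_apply, smul_eq_mul]
  exact Finset.sum_nonneg fun v hv => mul_nonneg (hc v) (Nat.cast_nonneg _)

lemma cone_add {x y : WithBot P → ℝ} (hx : x ∈ hibiCone P) (hy : y ∈ hibiCone P) :
    x + y ∈ hibiCone P := by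
  classical
  obtain ⟨s₁, c₁, hs₁, hc₁, rfl⟩ := hx
  obtain ⟨s₂, c₂, hs₂, hc₂, rfl⟩ := hy
  refine ⟨s₁ ∪ s₂,
    fun v => (if v ∈ s₁ then c₁ v else 0) + (if v ∈ s₂ then c₂ v else 0), ?_, ?_, ?_⟩
  · intro v hv
    rcases Finset.mem_union.mp hv with h | h
    · exact hs₁ h
    · exact hs₂ h
  · intro v
    have h1 : (0:ℝ) ≤ if v ∈ s₁ then c₁ v else 0 := by
      split_ifs with h; exacts [hc₁ v, le_rfl]
    have h2 : (0:ℝ) ≤ if v ∈ s₂ then c₂ v else 0 := by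
      split_ifs with h; exacts [hc₂ v, le_rfl]
    exact add_nonneg h1 h2
  · have e1 : ∑ v ∈ s₁ ∪ s₂, (if v ∈ s₁ then c₁ v else 0) • (fun a => ((v a : ℝ)))
        = ∑ v ∈ s₁, c₁ v • (fun a => ((v a : ℝ))) := by
      rw [← Finset.sum_subset Finset.subset_union_left (fun v _ hv => by simp [hv])]
      exact Finset.sum_congr rfl fun v hv => by simp [hv]
    have e2 : ∑ v ∈ s₁ ∪ s₂, (if v ∈ s₂ then c₂ v else 0) • (fun a => ((v a : ℝ)))
        = ∑ v ∈ s₂, c₂ v • (fun a => ((v a : ℝ))) := by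
      rw [← Finset.sum_subset Finset.subset_union_right (fun v _ hv => by simp [hv])]
      exact Finset.sum_congr rfl fun v hv => by simp [hv]
    calc (∑ v ∈ s₁, c₁ v • (fun a => ((v a : ℝ)))) + ∑ v ∈ s₂, c₂ v • (fun a => ((v a : ℝ)))
        = (∑ v ∈ s₁ ∪ s₂, (if v ∈ s₁ then c₁ v else 0) • (fun a => ((v a : ℝ))))
          + ∑ v ∈ s₁ ∪ s₂, (if v ∈ s₂ then c₂ v else 0) • (fun a => ((v a : ℝ))) := by
          rw [e1, e2]
      _ = ∑ v ∈ s₁ ∪ s₂,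
            ((if v ∈ s₁ then c₁ v else 0) + (if v ∈ s₂ then c₂ v else 0)) •
              (fun a => ((v a : ℝ))) := by
          rw [← Finset.sum_add_distrib]
          exact Finset.sum_congr rfl fun v _ => by rw [add_smul]

lemma cone_smul_single (t : ℝ) (ht : 0 ≤ t) (w : WithBot P → ℕ)
    (hw : w ∈ hibiSemigroup P) : (fun a => t * (w a : ℝ)) ∈ hibiCone P := by
  refine ⟨{w}, fun _ => t, by simpa using hw, fun _ => ht, ?_⟩
  rw [Finset.sum_singleton]
  rfl

lemma antitone_mem_cone : ∀ (n : ℕ) (x : WithBot P → ℝ),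
    (univ.filter fun a => 0 < x a).card ≤ n →
    (∀ a b : WithBot P, a ≤ b → x b ≤ x a) → (∀ a, 0 ≤ x a) → x ∈ hibiCone P := by
  intro n
  induction n with
  | zero =>
    intro x hcard hanti hpos
    have hx : x = fun _ => 0 := by
      funext a
      by_contra h
      have h0 : 0 < x a := lt_of_le_of_ne (hpos a) (Ne.symm h)
      have hm : a ∈ univ.filter fun a => 0 < x a := by simp [h0]
      have := Finset.card_pos.mpr ⟨a, hm⟩
      omega
    refine ⟨∅, fun _ => 0, by simp, fun _ => le_rfl, ?_⟩
    rw [hx]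
    exact Finset.sum_empty.symm
  | succ n ih =>
    intro x hcard hanti hpos
    rcases Finset.eq_empty_or_nonempty (univ.filter fun a => 0 < x a) with he | hne
    · exact ih x (by rw [he]; simp) hanti hpos
    · obtain ⟨a₀, ha₀, hmin⟩ := Finset.exists_min_image _ x hne
      have ha₀' : 0 < x a₀ := (Finset.mem_filter.mp ha₀).2
      classical
      set v : WithBot P → ℕ := fun a => if 0 < x a then 1 else 0 with hv
      have hvs : v ∈ hibiSemigroup P := by
        intro a b hab
        by_cases hb : 0 < x b
        · have ha : 0 < x a := lt_of_lt_of_le hb (hanti a b hab)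
          simp [hv, hb, ha]
        · simp [hv, hb]
      set x' : WithBot P → ℝ := fun a => x a - x a₀ * (v a : ℝ) with hx'
      have hx'nonneg : ∀ a, 0 ≤ x' a := by
        intro a
        by_cases ha : 0 < x a
        · have hm : a ∈ univ.filter fun a => 0 < x a := by simp [ha]
          have := hmin a hm
          simp only [hx', hv, if_pos ha, Nat.cast_one, mul_one]
          linarith
        · simp only [hx', hv, if_neg ha, Nat.cast_zero, mul_zero, sub_zero]
          exact hpos a
      have hx'anti : ∀ a b : WithBot P, a ≤ b → x' b ≤ x' a := by
        intro a b hab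
        by_cases hb : 0 < x b
        · have ha : 0 < x a := lt_of_lt_of_le hb (hanti a b hab)
          simp only [hx', hv, if_pos ha, if_pos hb, Nat.cast_one, mul_one]
          have := hanti a b hab; linarith
        · have hxb : x b = 0 := le_antisymm (not_lt.mp hb) (hpos b)
          have hb0 : x' b = 0 := by
            simp [hx', hv, hb, hxb]
          rw [hb0]; exact hx'nonneg a
      have hsub : (univ.filter fun a => 0 < x' a) ⊆
          (univ.filter fun a => 0 < x a).erase a₀ := by
        intro a ha
        have hx'a : 0 < x' a := (Finset.mem_filter.mp ha).2
        have hxa : 0 < x a := by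
          by_contra h
          have heq : x' a = x a := by simp [hx', hv, h]
          rw [heq] at hx'a
          exact h hx'a
        refine Finset.mem_erase.mpr ⟨?_, by simp [hxa]⟩
        rintro rfl
        have h0 : x' a = 0 := by
          simp [hx', hv, ha₀']
        rw [h0] at hx'a; exact lt_irrefl 0 hx'a
      have hcard' : (univ.filter fun a => 0 < x' a).card ≤ n := by
        have h1 := Finset.card_le_card hsub
        have h2 := Finset.card_erase_of_mem ha₀
        omega
      have hx'cone := ih x' hcard' hx'anti hx'nonneg
      have hgen := cone_smul_single (x a₀) (le_of_lt ha₀') v hvs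
      have hx_eq : x = x' + fun a => x a₀ * (v a : ℝ) := by
        funext a; simp [hx']
      rw [hx_eq]
      exact cone_add hx'cone hgen

lemma interior_strict {x : WithBot P → ℝ} (hx : x ∈ interior (hibiCone P)) :
    (∀ a b : WithBot P, a < b → x b < x a) ∧ (∀ a, 0 < x a) := by
  classical
  obtain ⟨ε, hε, hball⟩ := Metric.mem_nhds_iff.mp (mem_interior_iff_mem_nhds.mp hx)
  constructor
  · intro a b hab
    by_contra h
    push_neg at h
    have hy : Function.update x b (x b + ε / 2) ∈ Metric.ball x ε := by
      rw [Metric.mem_ball, dist_pi_lt_iff hε]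
      intro i
      rcases eq_or_ne i b with rfl | hib
      · rw [Function.update_self, Real.dist_eq]
        have he : x i + ε / 2 - x i = ε / 2 := by ring
        rw [he, abs_of_pos (by linarith)]
        linarith
      · rw [Function.update_of_ne hib]
        simpa using hε
    have hle := cone_le (hball hy) (le_of_lt hab)
    rw [Function.update_self, Function.update_of_ne (ne_of_lt hab)] at hle
    linarith
  · intro a
    have hy : Function.update x a (x a - ε / 2) ∈ Metric.ball x ε := by
      rw [Metric.mem_ball, dist_pi_lt_iff hε]
      intro i
      rcases eq_or_ne i a with rfl | hia
      · rw [Function.update_self, Real.dist_eq]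
        have he : x i - ε / 2 - x i = -(ε / 2) := by ring
        rw [he, abs_neg, abs_of_pos (by linarith)]
        linarith
      · rw [Function.update_of_ne hia]
        simpa using hε
    have h0 := cone_nonneg (hball hy) a
    rw [Function.update_self] at h0
    linarith

lemma strict_mem_interior {x : WithBot P → ℝ}
    (h1 : ∀ a b : WithBot P, a < b → x b < x a) (h2 : ∀ a, 0 < x a) :
    x ∈ interior (hibiCone P) := by
  set U : Set (WithBot P → ℝ) :=
    {y | (∀ a b : WithBot P, a < b → y b < y a) ∧ ∀ a, 0 < y a} with hU
  have hUopen : IsOpen U := by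
    have hrw : U = (⋂ (a : WithBot P) (b : WithBot P),
        {y : WithBot P → ℝ | a < b → y b < y a}) ∩
        ⋂ (a : WithBot P), {y : WithBot P → ℝ | 0 < y a} := by
      ext y
      simp [hU, Set.mem_iInter]
    rw [hrw]
    apply IsOpen.inter
    · refine isOpen_iInter_of_finite fun a => isOpen_iInter_of_finite fun b => ?_
      by_cases hab : a < b
      · have heq : {y : WithBot P → ℝ | a < b → y b < y a} = {y | y b < y a} := by
          ext y; simp [hab]
        rw [heq]
        exact isOpen_lt (continuous_apply b) (continuous_apply a)
      · have heq : {y : WithBot P → ℝ | a < b → y b < y a} = Set.univ := by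
          ext y; simp [hab]
        rw [heq]; exact isOpen_univ
    · exact isOpen_iInter_of_finite fun a =>
        isOpen_lt continuous_const (continuous_apply a)
  have hUsub : U ⊆ hibiCone P := by
    intro y hy
    refine antitone_mem_cone ((univ.filter fun a => 0 < y a).card) y le_rfl ?_
      (fun a => (hy.2 a).le)
    intro a b hab
    rcases lt_or_eq_of_le hab with h | h
    · exact (hy.1 a b h).le
    · exact le_of_eq (by rw [h])
  exact interior_maximal hUsub hUopen ⟨h1, h2⟩

end Aux

noncomputable def witnessF : WithBot P → ℕ :=
  fun z => WithBot.recBotCoe (posetRank P + 2) (fun a => posetRank P + 1 - pheight a) z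

lemma witnessF_bot : witnessF P ⊥ = posetRank P + 2 := rfl

lemma witnessF_coe (a : P) : witnessF P (a : WithBot P) = posetRank P + 1 - pheight a := rfl

/-- The a-invariant of the Hibi ring `K[M]` of a finite poset `P`, via the description
`K_{K[M]} = ⊕_{ω ∈ int(ℝ_{≥0}M) ∩ M} K·X^ω` of the canonical module:
`a(K[M]) = -min{deg X^ω : ω ∈ int(ℝ_{≥0}M) ∩ M}` where `deg X^ω = ω_{-∞}`.
It equals `-(rank P + 2)`. -/
theorem hibi_a_invariant [Nonempty P] :
    -((sInf {n : ℕ | ∃ f ∈ hibiSemigroup P,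
        (fun a => (f a : ℝ)) ∈ interior (hibiCone P) ∧ f ⊥ = n} : ℕ) : ℤ) =
      -((posetRank P : ℤ) + 2) := by
  set r := posetRank P with hr
  set S := {n : ℕ | ∃ f ∈ hibiSemigroup P,
      (fun a => (f a : ℝ)) ∈ interior (hibiCone P) ∧ f ⊥ = n} with hS
  have hstrict : ∀ a b : WithBot P, a < b → witnessF P b < witnessF P a := by
    intro a b
    induction b using WithBot.recBotCoe with
    | bot => intro hab; exact absurd hab (by simp)
    | coe b' =>
      induction a using WithBot.recBotCoe with
      | bot =>
        intro _
        rw [witnessF_bot, witnessF_coe]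
        omega
      | coe a' =>
        intro hab
        have hab' : a' < b' := WithBot.coe_lt_coe.mp hab
        have h1 := pheight_lt hab'
        have h2 := pheight_le_rank (P := P) b'
        rw [witnessF_coe, witnessF_coe]
        omega
  have hpos : ∀ a : WithBot P, 0 < witnessF P a := by
    intro a
    induction a using WithBot.recBotCoe with
    | bot => rw [witnessF_bot]; omega
    | coe a' =>
      have h2 := pheight_le_rank (P := P) a'
      rw [witnessF_coe]
      omega
  have hsemi : witnessF P ∈ hibiSemigroup P := by
    intro a b hab
    rcases lt_or_eq_of_le hab with h | h
    · exact (hstrict a b h).le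
    · exact le_of_eq (by rw [h])
  have hint : (fun a => ((witnessF P a : ℝ))) ∈ interior (hibiCone P) := by
    apply strict_mem_interior
    · intro a b hab
      exact_mod_cast hstrict a b hab
    · intro a
      exact_mod_cast hpos a
  have hmem : r + 2 ∈ S := ⟨witnessF P, hsemi, hint, witnessF_bot P⟩
  have hlow : ∀ m ∈ S, r + 2 ≤ m := by
    rintro m ⟨f, hf, hintf, rfl⟩
    obtain ⟨hstr, hposR⟩ := interior_strict hintf
    have hstrN : ∀ a b : WithBot P, a < b → f b < f a := by
      intro a b h
      exact_mod_cast hstr a b h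
    have hposN : ∀ a : WithBot P, 1 ≤ f a := by
      intro a
      have h1 : (0:ℝ) < (f a : ℝ) := hposR a
      have h2 : 0 < f a := by exact_mod_cast h1
      omega
    obtain ⟨g, hg⟩ := rank_spec (P := P)
    have key : ∀ k, k ≤ r → 1 + k ≤ f ((g ⟨r - k, by omega⟩ : P) : WithBot P) := by
      intro k
      induction k with
      | zero => intro _; simpa using hposN _
      | succ k ihk =>
        intro hk
        have h1 := ihk (by omega)
        have hlt : (⟨r - (k + 1), by omega⟩ : Fin (r + 1)) < ⟨r - k, by omega⟩ :=
          Fin.mk_lt_mk.mpr (by omega)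
        have h2 := hstrN _ _ (WithBot.coe_lt_coe.mpr (hg hlt))
        omega
    have h0 := key r le_rfl
    have hb := hstrN ⊥ ((g ⟨r - r, by omega⟩ : P) : WithBot P) (WithBot.bot_lt_coe _)
    omega
  have hinf : sInf S = r + 2 :=
    le_antisymm (Nat.sInf_le hmem) (le_csInf ⟨r + 2, hmem⟩ hlow)
  rw [hinf]
  push_cast
  ring
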